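/- Let p₁, p₂, p₃ be linearly independent unit vectors in ℝ³ (points of the sphere S²), and for each unordered pair {i,j} let c_ij = c_ji be a unit vector in span(p_i, p_j). Then there exists a nonzero vector c ∈ ℝ³ satisfying c · ((c₁₂ · p₁)p₂ − (c₁₂ · p₂)p₁) = 0, c · ((c₂₃ · p₂)p₃ − (c₂₃ · p₃)p₂) = 0, and c · ((c₃₁ · p₃)p₁ − (c₃₁ · p₁)p₃) = 0 (i.e., the three great circles perpendicular to the edges through the edge centers meet at a single point of the projective sphere) if and only if (p₁ · c₁₂)(p₂ · c₂₃)(p₃ · c₃₁) = (p₁ · c₃₁)(p₂ · c₁₂)(p₃ · c₂₃); writing cos d_ij := p_i · c_ij, this condition reads cos d₁₂ cos d₂₃ cos d₃₁ = cos d₂₁ cos d₃₂ cos d₁₃. -/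

import Mathlib

/-!
The three vectors `(c_ij · p_i) p_j - (c_ij · p_j) p_i` are the rows of `A P`, where `P` has rows
`p₁, p₂, p₃` and `A` is a cyclic matrix of the six numbers `c_ij · p_k`. A nonzero vector
orthogonal to all three rows exists iff `det (A P) = det A · det P = 0`; since the `p_i` are
independent, `det P ≠ 0`, and `det A` is exactly the difference of the two sides of the
compatibility equation.
-/

noncomputable section

/-- The standard dot product on ℝ³. -/
def dot3 (u v : Fin 3 → ℝ) : ℝ := u 0 * v 0 + u 1 * v 1 + u 2 * v 2

open Matrix

theorem dot3_eq_dotProduct (u v : Fin 3 → ℝ) : dot3 u v = u ⬝ᵥ v := by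
  simp [dot3, dotProduct, Fin.sum_univ_three]

theorem dot3_comm (u v : Fin 3 → ℝ) : dot3 u v = dot3 v u := by
  simp only [dot3_eq_dotProduct, dotProduct_comm]

theorem Matrix.exists_ne_zero_forall_dotProduct_row_eq_zero_iff {n R : Type*} [Fintype n]
    [DecidableEq n] [CommRing R] [IsDomain R] (q : n → n → R) :
    (∃ x ≠ 0, ∀ i, x ⬝ᵥ q i = 0) ↔ (Matrix.of q).det = 0 := by
  simp only [← exists_mulVec_eq_zero_iff, funext_iff, mulVec, of_apply, dotProduct_comm (q _),
    Pi.zero_apply]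

theorem exists_ne_zero_dot3_eq_zero_iff (u v w : Fin 3 → ℝ) :
    (∃ x, x ≠ 0 ∧ dot3 x u = 0 ∧ dot3 x v = 0 ∧ dot3 x w = 0) ↔
      (Matrix.of ![u, v, w]).det = 0 := by
  simp [← exists_ne_zero_forall_dotProduct_row_eq_zero_iff, Fin.forall_fin_succ,
    dot3_eq_dotProduct]

theorem Matrix.det_ne_zero_of_linearIndependent_rows {n K : Type*} [Fintype n] [DecidableEq n]
    [Field K] {p : n → n → K} (hp : LinearIndependent K p) : (Matrix.of p).det ≠ 0 :=
  (isUnit_iff_isUnit_det _).mp (linearIndependent_rows_iff_isUnit.mp hp) |>.ne_zero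

theorem det_of_cyclic_differences {R : Type*} [CommRing R] (p : Fin 3 → Fin 3 → R)
    (a b d e f g : R) :
    (Matrix.of ![a • p 1 - b • p 0, d • p 2 - e • p 1, f • p 0 - g • p 2]).det
      = (a * d * f - b * e * g) * (Matrix.of p).det := by
  have hrows : Matrix.of ![a • p 1 - b • p 0, d • p 2 - e • p 1, f • p 0 - g • p 2]
      = !![-b, a, 0; 0, -e, d; f, 0, -g] * Matrix.of p := by
    ext i j
    fin_cases i <;> simp [Matrix.mul_apply, Fin.sum_univ_three] <;> ring
  rw [hrows, det_mul, det_fin_three]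
  simp only [of_apply, cons_val', cons_val_zero, cons_val_one, cons_val_two, empty_val',
    cons_val_fin_one, head_cons, tail_cons, head_fin_const]
  ring

theorem spherical_duality_iff_compatibility_general
    (p : Fin 3 → (Fin 3 → ℝ)) (hp : LinearIndependent ℝ p)
    (c : Fin 3 → Fin 3 → (Fin 3 → ℝ)) :
    (∃ cc : Fin 3 → ℝ, cc ≠ 0 ∧
        dot3 cc (dot3 (c 0 1) (p 0) • p 1 - dot3 (c 0 1) (p 1) • p 0) = 0 ∧
        dot3 cc (dot3 (c 1 2) (p 1) • p 2 - dot3 (c 1 2) (p 2) • p 1) = 0 ∧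
        dot3 cc (dot3 (c 2 0) (p 2) • p 0 - dot3 (c 2 0) (p 0) • p 2) = 0) ↔
      dot3 (p 0) (c 0 1) * dot3 (p 1) (c 1 2) * dot3 (p 2) (c 2 0)
        = dot3 (p 0) (c 2 0) * dot3 (p 1) (c 0 1) * dot3 (p 2) (c 1 2) := by
  rw [exists_ne_zero_dot3_eq_zero_iff, det_of_cyclic_differences, mul_eq_zero,
    or_iff_left (det_ne_zero_of_linearIndependent_rows hp), sub_eq_zero]
  simp only [dot3_comm (p _)]
  rw [mul_rotate (dot3 (c 2 0) (p 0))]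

/-- Proposition 7.1 (spherical compatibility): the three great circles perpendicular to the
edges of a spherical triangle through the edge centers meet at a single point of the
projective sphere if and only if the compatibility equation
`(p₁·c₁₂)(p₂·c₂₃)(p₃·c₃₁) = (p₁·c₃₁)(p₂·c₁₂)(p₃·c₂₃)` holds, i.e.,
`cos d₁₂ cos d₂₃ cos d₃₁ = cos d₂₁ cos d₃₂ cos d₁₃` where `cos d_ij = p_i · c_ij`. -/
theorem spherical_duality_iff_compatibility
    (p : Fin 3 → (Fin 3 → ℝ)) (hp : LinearIndependent ℝ p)
    (hpS : ∀ i, dot3 (p i) (p i) = 1)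
    (c : Fin 3 → Fin 3 → (Fin 3 → ℝ))
    (hcsymm : ∀ i j : Fin 3, c i j = c j i)
    (hcS : ∀ i j : Fin 3, i ≠ j → dot3 (c i j) (c i j) = 1 ∧
      c i j ∈ Submodule.span ℝ ({p i, p j} : Set (Fin 3 → ℝ))) :
    (∃ cc : Fin 3 → ℝ, cc ≠ 0 ∧
        dot3 cc (dot3 (c 0 1) (p 0) • p 1 - dot3 (c 0 1) (p 1) • p 0) = 0 ∧
        dot3 cc (dot3 (c 1 2) (p 1) • p 2 - dot3 (c 1 2) (p 2) • p 1) = 0 ∧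
        dot3 cc (dot3 (c 2 0) (p 2) • p 0 - dot3 (c 2 0) (p 0) • p 2) = 0) ↔
      dot3 (p 0) (c 0 1) * dot3 (p 1) (c 1 2) * dot3 (p 2) (c 2 0)
        = dot3 (p 0) (c 2 0) * dot3 (p 1) (c 0 1) * dot3 (p 2) (c 1 2) :=
  spherical_duality_iff_compatibility_general p hp c
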